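/- Let H be a generalized shearlet dilation group in dimension d, i.e. H = {ε·exp(rY)·(I+X) : ε ∈ {±1}, r ∈ ℝ, X ∈ 𝔰} for a shearing Lie algebra 𝔰 and an admissible diagonal generator Y. Then the dual orbit of the first standard basis vector e₁ satisfies {hᵀe₁ : h ∈ H} = {ξ ∈ ℝ^d : ξ₁ ≠ 0}, this orbit is open, and the dual action of H on it is free: for h ∈ H, hᵀe₁ = e₁ implies h = I. -/

import Mathlib

open MeasureTheory Matrix Metric

noncomputable section

variable {n : Type*} [Fintype n] [DecidableEq n]

/-- The dual action `ξ ↦ hᵀ ξ` of a matrix on Euclidean space. -/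
def dualAct (h : Matrix n n ℝ) (ξ : EuclideanSpace ℝ n) : EuclideanSpace ℝ n :=
  (EuclideanSpace.equiv n ℝ).symm (h.transpose.mulVec (EuclideanSpace.equiv n ℝ ξ))

end

/-!
Write `g = ε exp(rY)(I + X)`. Since `Y` is diagonal with `Y₁₁ = 1` and `X` is strictly upper
triangular, `gᵀe₁`, the first row of `g`, is `ε eʳ (e₁ + X₀)`, where `X₀` is the first row of `X`.
The first-row map is injective on the `(d-1)`-dimensional space `𝔰` and lands in the hyperplane
`{v | v₁ = 0}`, so it is onto that hyperplane; as `ε eʳ` ranges over `ℝˣ`, the orbit is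
`{ξ | ξ₁ ≠ 0}`. If `gᵀe₁ = e₁` then `ε eʳ = 1` and `X₀ = 0`, so `ε = 1`, `r = 0` and `X = 0`.
-/

section Rows

variable {K n : Type*} [Field K] [Fintype n]

lemma finrank_ker_proj (i : n) :
    Module.finrank K (LinearMap.ker (LinearMap.proj i : (n → K) →ₗ[K] K)) =
      Fintype.card n - 1 := by
  have h := LinearMap.finrank_range_add_finrank_ker (LinearMap.proj i : (n → K) →ₗ[K] K)
  rw [LinearMap.range_eq_top.2 (LinearMap.proj_surjective i), finrank_top] at h
  simp only [Module.finrank_self, Module.finrank_fintype_fun_eq_card] at h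
  omega

lemma exists_mem_row_eq (i : n) (𝔰 : Submodule K (Matrix n n K))
    (hdiag : ∀ X ∈ 𝔰, X i i = 0) (hdim : Module.finrank K 𝔰 = Fintype.card n - 1)
    (hinj : ∀ X ∈ 𝔰, ∀ Y ∈ 𝔰, X i = Y i → X = Y) {v : n → K} (hv : v i = 0) :
    ∃ X ∈ 𝔰, X i = v := by
  let row : 𝔰 →ₗ[K] n → K := (LinearMap.proj i : (n → n → K) →ₗ[K] n → K).domRestrict 𝔰
  have hrow : Function.Injective row := fun X Y h => Subtype.ext (hinj X X.2 Y Y.2 h)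
  have hrange : LinearMap.range row = LinearMap.ker (LinearMap.proj i) := by
    refine Submodule.eq_of_le_of_finrank_eq ?_ ?_
    · rintro _ ⟨X, rfl⟩
      exact hdiag X X.2
    · rw [LinearMap.finrank_range_of_inj hrow, hdim, finrank_ker_proj]
  obtain ⟨X, hX⟩ : v ∈ LinearMap.range row := hrange ▸ hv
  exact ⟨X, X.2, hX⟩

lemma isUnit_one_add_of_strictlyUpper [LinearOrder n] [DecidableEq n] {X : Matrix n n K}
    (hX : ∀ i j, ¬i < j → X i j = 0) : IsUnit (1 + X) := by
  have htri : (1 + X).IsUpperTriangular := fun i j (hji : j < i) => by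
    simp [one_apply_ne hji.ne', hX i j hji.not_gt]
  rw [isUnit_iff_isUnit_det, det_of_isUpperTriangular htri]
  simp [hX _ _ (lt_irrefl _)]

end Rows

lemma exists_sign_mul_exp_eq {c : ℝ} (hc : c ≠ 0) :
    ∃ ε r : ℝ, (ε = 1 ∨ ε = -1) ∧ ε * Real.exp r = c := by
  refine ⟨SignType.sign c, Real.log |c|, ?_, by rw [Real.exp_log (abs_pos.2 hc), sign_mul_abs]⟩
  rcases hc.lt_or_gt with h | h <;> simp [h]

lemma eq_one_of_sign_mul_exp_eq_one {ε r : ℝ} (hε : ε = 1 ∨ ε = -1)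
    (h : ε * Real.exp r = 1) : ε = 1 ∧ r = 0 := by
  rcases hε with rfl | rfl
  · simpa using h
  · nlinarith [Real.exp_pos r]

lemma isUnit_smul_exp_mul_one_add {n : Type*} [Fintype n] [LinearOrder n] {ε : ℝ} (hε : ε ≠ 0)
    (r : ℝ) (y : n → ℝ) {X : Matrix n n ℝ} (hX : ∀ i j, ¬i < j → X i j = 0) :
    IsUnit (ε • (NormedSpace.exp (r • diagonal y) * (1 + X))) :=
  ((isUnit_exp _).mul (isUnit_one_add_of_strictlyUpper hX)).smul (Units.mk0 ε hε)

section DualAction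

variable {n : Type*} [Fintype n] [DecidableEq n]

lemma dualAct_single_one (M : Matrix n n ℝ) (i : n) :
    dualAct M (EuclideanSpace.single i 1) = (EuclideanSpace.equiv n ℝ).symm (M i) := by
  change (EuclideanSpace.equiv n ℝ).symm (Mᵀ *ᵥ Pi.single i 1) = _
  rw [mulVec_single_one]
  rfl

lemma exp_smul_diagonal_mul_row (r : ℝ) (y : n → ℝ) (M : Matrix n n ℝ) (i : n) :
    (NormedSpace.exp (r • diagonal y) * M) i = Real.exp (r * y i) • M i := by
  ext j
  rw [← diagonal_smul, exp_diagonal, diagonal_mul, Pi.coe_exp, Real.exp_eq_exp_ℝ]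
  rfl

lemma smul_exp_mul_one_add_row (ε r : ℝ) {y : n → ℝ} {i : n} (hy : y i = 1)
    (X : Matrix n n ℝ) :
    (ε • (NormedSpace.exp (r • diagonal y) * (1 + X))) i =
      (ε * Real.exp r) • (Pi.single i 1 + X i) := by
  ext j
  simp [exp_smul_diagonal_mul_row, hy, one_eq_pi_single, mul_assoc]

end DualAction

theorem stmt13 (d : ℕ) [NeZero d]
    (𝔰 : Submodule ℝ (Matrix (Fin d) (Fin d) ℝ))
    (hupper : ∀ X ∈ 𝔰, ∀ i j : Fin d, ¬i < j → X i j = 0)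
    (hdim : Module.finrank ℝ ↥𝔰 = d - 1)
    (hinj : ∀ X ∈ 𝔰, ∀ Y ∈ 𝔰, (∀ j, X 0 j = Y 0 j) → X = Y)
    (y : Fin d → ℝ) (hy : y 0 = 1)
    (H : Subgroup (GL (Fin d) ℝ))
    (hH : ∀ g : GL (Fin d) ℝ, g ∈ H ↔ ∃ ε r : ℝ, ∃ X ∈ 𝔰, (ε = 1 ∨ ε = -1) ∧
      (↑g : Matrix (Fin d) (Fin d) ℝ) =
        ε • (NormedSpace.exp (r • Matrix.diagonal y) * (1 + X))) :
    {ξ : EuclideanSpace ℝ (Fin d) | ∃ g : GL (Fin d) ℝ, g ∈ H ∧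
        dualAct (↑g) (EuclideanSpace.single (0 : Fin d) (1 : ℝ)) = ξ} =
      {ξ : EuclideanSpace ℝ (Fin d) | EuclideanSpace.equiv (Fin d) ℝ ξ 0 ≠ 0} ∧
    IsOpen {ξ : EuclideanSpace ℝ (Fin d) | EuclideanSpace.equiv (Fin d) ℝ ξ 0 ≠ 0} ∧
    ∀ g : GL (Fin d) ℝ, g ∈ H →
      dualAct (↑g) (EuclideanSpace.single (0 : Fin d) (1 : ℝ)) =
        EuclideanSpace.single (0 : Fin d) (1 : ℝ) → g = 1 := by
  have hdiag : ∀ X ∈ 𝔰, X 0 0 = 0 := fun X hX => hupper X hX 0 0 (lt_irrefl 0)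
  have hε0 : ∀ {ε : ℝ}, (ε = 1 ∨ ε = -1) → ε ≠ 0 := by rintro _ (rfl | rfl) <;> norm_num
  refine ⟨Set.ext fun ξ => ⟨?_, fun (hξ : EuclideanSpace.equiv (Fin d) ℝ ξ 0 ≠ 0) => ?_⟩,
    isOpen_ne.preimage (by fun_prop), ?_⟩
  · rintro ⟨g, hg, rfl⟩
    obtain ⟨ε, r, X, hX, hε, hg⟩ := (hH g).1 hg
    simp [dualAct_single_one, hg, smul_exp_mul_one_add_row ε r hy, hdiag X hX, hε0 hε,
      Real.exp_ne_zero]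
  · set ξ' := EuclideanSpace.equiv (Fin d) ℝ ξ
    obtain ⟨ε, r, hε, hεr⟩ := exists_sign_mul_exp_eq hξ
    obtain ⟨X, hX, hXrow⟩ := exists_mem_row_eq 0 𝔰 hdiag (by simpa using hdim)
      (fun X hX Y hY h => hinj X hX Y hY (congrFun h)) (v := (ξ' 0)⁻¹ • ξ' - Pi.single 0 1)
      (by simp [inv_mul_cancel₀ hξ])
    have hu := isUnit_smul_exp_mul_one_add (hε0 hε) r y (hupper X hX)
    refine ⟨hu.unit, (hH _).2 ⟨ε, r, X, hX, hε, hu.unit_spec⟩, ?_⟩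
    rw [dualAct_single_one, hu.unit_spec, smul_exp_mul_one_add_row ε r hy, hXrow, hεr,
      add_sub_cancel, smul_smul, mul_inv_cancel₀ hξ, one_smul,
      ContinuousLinearEquiv.symm_apply_apply]
  · intro g hg hfix
    obtain ⟨ε, r, X, hX, hε, hgX⟩ := (hH g).1 hg
    have hrow : (ε * Real.exp r) • (Pi.single 0 1 + X 0) = Pi.single (0 : Fin d) (1 : ℝ) := by
      rw [dualAct_single_one, hgX, smul_exp_mul_one_add_row ε r hy] at hfix
      exact (EuclideanSpace.equiv (Fin d) ℝ).symm.injective hfix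
    obtain ⟨rfl, rfl⟩ : ε = 1 ∧ r = 0 :=
      eq_one_of_sign_mul_exp_eq_one hε (by simpa [hdiag X hX] using congrFun hrow 0)
    obtain rfl : X = 0 := hinj X hX 0 (zero_mem 𝔰) fun j => by
      simpa using congrFun hrow j
    ext1
    simp [hgX]
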